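/- arXiv:2106.10994 — 4 statements merged into one kernel-verified Lean document; each statement's English description precedes it below -/
import Mathlib

section
/- Let L be an n×n real symmetric matrix such that both L and 2I − L are positive semidefinite (equivalently, the eigenvalues of L lie in [0,2]), let K ∈ ℕ, and let θ_0,…,θ_K be nonnegative reals. Then the BernNet operator ∑_{k=0}^{K} θ_k · 2^{−K} · C(K,k) · (2I − L)^{K−k} · L^k is a positive semidefinite matrix. -/
/-!
Each Bernstein basis term `(2I - L)^(K-k) L^k` is a product of powers of the two commuting
positive semidefinite matrices `2I - L` and `L`, and in the C⋆-algebra of matrices commuting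
nonnegative elements have nonnegative product. A nonnegative combination of such terms is then
positive semidefinite.
-/

open Finset Matrix

open scoped ComplexOrder MatrixOrder

theorem Matrix.PosSemidef.mul_of_commute {ι 𝕜 : Type*} [Fintype ι] [DecidableEq ι] [RCLike 𝕜]
    {A B : Matrix ι ι 𝕜} (hA : A.PosSemidef) (hB : B.PosSemidef) (hAB : Commute A B) :
    (A * B).PosSemidef :=
  (hAB.mul_nonneg hA.nonneg hB.nonneg).posSemidef

/-- If `L` is real symmetric with `L ⪰ 0` and `2I - L ⪰ 0` (eigenvalues in `[0,2]`), and the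
coefficients `θ_k` are nonnegative, then the BernNet operator
`∑_{k=0}^K θ_k · 2^{-K} · C(K,k) · (2I - L)^{K-k} · L^k` is positive semidefinite. -/
theorem bernnet_posSemidef
    {n : ℕ} (L : Matrix (Fin n) (Fin n) ℝ)
    (hL : L.PosSemidef)
    (hL2 : (2 • (1 : Matrix (Fin n) (Fin n) ℝ) - L).PosSemidef)
    (K : ℕ) (θ : ℕ → ℝ) (hθ : ∀ k, 0 ≤ θ k) :
    (∑ k ∈ Finset.range (K + 1),
        (θ k * ((2 : ℝ) ^ K)⁻¹ * (K.choose k : ℝ)) •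
          ((2 • (1 : Matrix (Fin n) (Fin n) ℝ) - L) ^ (K - k) * L ^ k)).PosSemidef := by
  have hcomm : Commute (2 • (1 : Matrix (Fin n) (Fin n) ℝ) - L) L :=
    ((Commute.one_left L).smul_left 2).sub_left (Commute.refl L)
  refine posSemidef_sum _ fun k _ => PosSemidef.smul ?_ ?_
  · exact (hL2.pow _).mul_of_commute (hL.pow _) (hcomm.pow_pow _ _)
  · exact mul_nonneg (mul_nonneg (hθ k) (by positivity)) (by positivity)
end

section
/- Let p be a real polynomial satisfying p(x) > 0 for all x ∈ [0,1]. Then there exist K ∈ ℕ and nonnegative real coefficients θ_0,…,θ_K such that p(x) = ∑_{k=0}^{K} θ_k · C(K,k) · (1−x)^{K−k} · x^k for all x ∈ ℝ. That is, every polynomial strictly positive on [0,1] is a nonnegative linear combination of Bernstein basis polynomials of some degree K. -/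
/-! Degree elevation, `x ^ i = ∑ₖ C(k,i) / C(K,i) · b_k^K(x)` for `i ≤ K`, writes `p = ∑ᵢ aᵢ xⁱ`
in the degree-`K` Bernstein basis with coefficients `θₖ = ∑ᵢ aᵢ C(k,i) / C(K,i)`. Since
`C(k,i) / C(K,i) = ∏_{j<i} (k - j) / (K - j)` is within `O(i² / K)` of `(k / K) ^ i`, we get
`θₖ = p(k / K) + O(1 / K)` uniformly in `k ≤ K`, and `p` is bounded below by a positive constant
on `[0,1]`, so every `θₖ` is positive once `K` is large. -/

open Finset Polynomial Filter Topology

theorem sum_choose_mul_bernstein_eq {R : Type*} [CommRing R] (K i : ℕ) (x : R) :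
    ∑ k ∈ range (K + 1), (k.choose i : R) * K.choose k * (1 - x) ^ (K - k) * x ^ k
      = K.choose i * x ^ i := by
  rcases lt_or_ge K i with hKi | hiK
  · rw [Nat.choose_eq_zero_of_lt hKi, Nat.cast_zero, zero_mul]
    refine sum_eq_zero fun k hk => ?_
    rw [Nat.choose_eq_zero_of_lt ((mem_range.mp hk).trans_le hKi), Nat.cast_zero, zero_mul,
      zero_mul, zero_mul]
  obtain ⟨m, rfl⟩ := Nat.exists_eq_add_of_le hiK
  rw [add_assoc, sum_range_add, sum_eq_zero fun k hk =>
    by rw [Nat.choose_eq_zero_of_lt (mem_range.mp hk), Nat.cast_zero]; ring, zero_add]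
  have hchoose (l : ℕ) : ((i + l).choose i : R) * (i + m).choose (i + l)
      = (i + m).choose i * m.choose l := by
    rw [mul_comm, ← Nat.cast_mul, Nat.choose_mul (Nat.le_add_right i l)]
    simp
  calc ∑ l ∈ range (m + 1), ((i + l).choose i : R) * (i + m).choose (i + l)
          * (1 - x) ^ (i + m - (i + l)) * x ^ (i + l)
      = (i + m).choose i * x ^ i *
          ∑ l ∈ range (m + 1), x ^ l * (1 - x) ^ (m - l) * m.choose l := by
        rw [mul_sum]
        refine sum_congr rfl fun l _ => ?_
        rw [hchoose, Nat.add_sub_add_left, pow_add]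
        ring
    _ = (i + m).choose i * x ^ i := by rw [← add_pow, add_sub_cancel, one_pow, mul_one]

section Field
variable {R : Type*} [Field R]

/-- Meaningful only for `p.natDegree ≤ K`: otherwise some `K.choose i = 0` is divided by. -/
def bernsteinCoeff (p : R[X]) (K k : ℕ) : R :=
  ∑ i ∈ range (p.natDegree + 1), p.coeff i * (k.choose i / K.choose i)

variable [CharZero R]

theorem eval_eq_sum_bernsteinCoeff (p : R[X]) {K : ℕ} (hK : p.natDegree ≤ K) (x : R) :
    p.eval x = ∑ k ∈ range (K + 1),
      bernsteinCoeff p K k * K.choose k * (1 - x) ^ (K - k) * x ^ k := by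
  simp only [bernsteinCoeff, sum_mul]
  rw [sum_comm, eval_eq_sum_range]
  refine sum_congr rfl fun i hi => ?_
  have hchoose : (K.choose i : R) ≠ 0 :=
    Nat.cast_ne_zero.mpr (Nat.choose_pos ((Nat.lt_succ_iff.mp (mem_range.mp hi)).trans hK)).ne'
  calc p.coeff i * x ^ i
      = p.coeff i / K.choose i * ∑ k ∈ range (K + 1),
          (k.choose i : R) * K.choose k * (1 - x) ^ (K - k) * x ^ k := by
        rw [sum_choose_mul_bernstein_eq]; field_simp
    _ = _ := by rw [mul_sum]; exact sum_congr rfl fun k _ => by ring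

theorem choose_div_choose_eq_prod (k K i : ℕ) :
    (k.choose i : R) / K.choose i = ∏ j ∈ range i, ((k : R) - j) / (K - j) := by
  rw [Nat.cast_choose_eq_descPochhammer_div, Nat.cast_choose_eq_descPochhammer_div,
    div_div_div_cancel_right₀ (Nat.cast_ne_zero.mpr i.factorial_ne_zero),
    descPochhammer_eval_eq_prod_range, descPochhammer_eval_eq_prod_range, prod_div_distrib]

end Field

theorem norm_prod_sub_prod_le_sum {ι R : Type*} [NormedCommRing R] [NormOneClass R]
    (s : Finset ι) {f g : ι → R} (hf : ∀ j ∈ s, ‖f j‖ ≤ 1) (hg : ∀ j ∈ s, ‖g j‖ ≤ 1) :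
    ‖∏ j ∈ s, f j - ∏ j ∈ s, g j‖ ≤ ∑ j ∈ s, ‖f j - g j‖ := by
  classical
  induction s using Finset.induction_on with
  | empty => simp
  | insert a s ha ih =>
    rw [prod_insert ha, prod_insert ha, sum_insert ha]
    have hgs : ‖∏ j ∈ s, g j‖ ≤ 1 :=
      (Finset.norm_prod_le _ _).trans (prod_le_one (fun _ _ => norm_nonneg _)
        fun j hj => hg j (mem_insert_of_mem hj))
    calc ‖f a * ∏ j ∈ s, f j - g a * ∏ j ∈ s, g j‖
        = ‖f a * (∏ j ∈ s, f j - ∏ j ∈ s, g j) + (f a - g a) * ∏ j ∈ s, g j‖ := by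
          congr 1; ring
      _ ≤ 1 * ∑ j ∈ s, ‖f j - g j‖ + ‖f a - g a‖ * 1 := by
        refine (norm_add_le _ _).trans (add_le_add ?_ ?_) <;> refine (norm_mul_le _ _).trans ?_
        · exact mul_le_mul (hf a (mem_insert_self a s))
            (ih (fun j hj => hf j (mem_insert_of_mem hj)) fun j hj => hg j (mem_insert_of_mem hj))
            (norm_nonneg _) zero_le_one
        · exact mul_le_mul_of_nonneg_left hgs (norm_nonneg _)
      _ = ‖f a - g a‖ + ∑ j ∈ s, ‖f j - g j‖ := by ring

theorem abs_choose_div_choose_sub_div_pow_le {n K i k : ℕ} (hi : i ≤ n) (hn : n < K)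
    (hk : k ≤ K) : |(k.choose i : ℝ) / K.choose i - ((k : ℝ) / K) ^ i| ≤ n ^ 2 / (K - n) := by
  have hnK : (n : ℝ) < K := by exact_mod_cast hn
  have hkK : (k : ℝ) ≤ K := by exact_mod_cast hk
  have hdiv : (k : ℝ) / K ≤ 1 := div_le_one_of_le₀ hkK (by positivity)
  rcases lt_or_ge k i with hki | hik
  · have hkn : (k : ℝ) ≤ n ^ 2 := by
      exact_mod_cast hki.le.trans (hi.trans (Nat.le_self_pow two_ne_zero n))
    rw [Nat.choose_eq_zero_of_lt hki, Nat.cast_zero, zero_div, zero_sub, abs_neg,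
      abs_of_nonneg (by positivity)]
    calc ((k : ℝ) / K) ^ i ≤ k / K := pow_le_of_le_one (by positivity) hdiv (by omega)
      _ ≤ n ^ 2 / (K - n) := div_le_div₀ (by positivity) hkn (by linarith) (by linarith)
  have hfactor : ∀ j ∈ range i, |((k : ℝ) - j) / (K - j) - k / K| ≤ n / (K - n) := by
    intro j hj
    have hjn : (j : ℝ) < n := by exact_mod_cast (mem_range.mp hj).trans_le hi
    have hjK : (0 : ℝ) < K - j := by linarith
    have hK : (0 : ℝ) < K := by linarith [(j.cast_nonneg : (0 : ℝ) ≤ j)]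
    rw [show ((k : ℝ) - j) / (K - j) - k / K = -(j / (K - j) * ((K - k) / K)) by
        field_simp; ring, abs_neg, abs_mul, abs_of_nonneg (div_nonneg j.cast_nonneg hjK.le),
      abs_of_nonneg (div_nonneg (by linarith) hK.le)]
    calc (j : ℝ) / (K - j) * ((K - k) / K) ≤ j / (K - j) * 1 := by
          gcongr
          exact div_le_one_of_le₀ (by linarith [k.cast_nonneg (α := ℝ)]) hK.le
      _ ≤ n / (K - n) := by rw [mul_one]; gcongr
  have hratio : ∀ j ∈ range i, |((k : ℝ) - j) / (K - j)| ≤ 1 := by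
    intro j hj
    have hjk : (j : ℝ) < k := by exact_mod_cast (mem_range.mp hj).trans_le hik
    rw [abs_of_nonneg (div_nonneg (by linarith) (by linarith))]
    exact div_le_one_of_le₀ (by linarith) (by linarith)
  calc |(k.choose i : ℝ) / K.choose i - ((k : ℝ) / K) ^ i|
      = ‖∏ j ∈ range i, ((k : ℝ) - j) / (K - j) - ∏ _j ∈ range i, (k : ℝ) / K‖ := by
        rw [choose_div_choose_eq_prod, prod_const, card_range, Real.norm_eq_abs]
    _ ≤ ∑ j ∈ range i, ‖((k : ℝ) - j) / (K - j) - k / K‖ :=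
        norm_prod_sub_prod_le_sum _ hratio fun _ _ => by
          rw [Real.norm_eq_abs, abs_of_nonneg (by positivity)]; exact hdiv
    _ ≤ ∑ _j ∈ range i, (n : ℝ) / (K - n) := sum_le_sum hfactor
    _ ≤ n ^ 2 / (K - n) := by
        rw [sum_const, card_range, nsmul_eq_mul, sq, mul_div_assoc]
        gcongr

theorem abs_bernsteinCoeff_sub_eval_le (p : ℝ[X]) {K k : ℕ} (hK : p.natDegree < K)
    (hk : k ≤ K) :
    |bernsteinCoeff p K k - p.eval ((k : ℝ) / K)|
      ≤ (∑ i ∈ range (p.natDegree + 1), |p.coeff i|) * (p.natDegree ^ 2 / (K - p.natDegree)) := by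
  rw [bernsteinCoeff, eval_eq_sum_range, ← sum_sub_distrib, sum_mul]
  refine (abs_sum_le_sum_abs _ _).trans (sum_le_sum fun i hi => ?_)
  rw [← mul_sub, abs_mul]
  exact mul_le_mul_of_nonneg_left
    (abs_choose_div_choose_sub_div_pow_le (Nat.lt_succ_iff.mp (mem_range.mp hi)) hK hk)
    (abs_nonneg _)

theorem eventually_forall_bernsteinCoeff_pos {p : ℝ[X]}
    (hp : ∀ x ∈ Set.Icc (0 : ℝ) 1, 0 < p.eval x) :
    ∀ᶠ K in atTop, ∀ k ≤ K, 0 < bernsteinCoeff p K k := by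
  obtain ⟨x₀, hx₀, hmin⟩ := isCompact_Icc.exists_isMinOn (Set.nonempty_Icc.mpr zero_le_one)
    p.continuous.continuousOn
  have herr : Tendsto (fun K : ℕ => (∑ i ∈ range (p.natDegree + 1), |p.coeff i|) *
      (p.natDegree ^ 2 / ((K : ℝ) - p.natDegree))) atTop (𝓝 0) := by
    have hden : Tendsto (fun K : ℕ => (K : ℝ) - p.natDegree) atTop atTop :=
      tendsto_atTop_add_const_right _ _ tendsto_natCast_atTop_atTop
    simpa using (tendsto_const_nhds.div_atTop hden).const_mul _
  filter_upwards [herr.eventually (gt_mem_nhds (hp x₀ hx₀)), eventually_gt_atTop p.natDegree]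
    with K hsmall hnK k hk
  have hK : (0 : ℝ) < K := by exact_mod_cast (Nat.zero_le _).trans_lt hnK
  have hkK : (k : ℝ) / K ∈ Set.Icc (0 : ℝ) 1 :=
    ⟨by positivity, div_le_one_of_le₀ (by exact_mod_cast hk) hK.le⟩
  have hclose := abs_le.mp (abs_bernsteinCoeff_sub_eval_le p hnK hk)
  linarith [isMinOn_iff.mp hmin _ hkK]

/-- Every real polynomial strictly positive on `[0,1]` is a nonnegative linear combination
of Bernstein basis polynomials of some degree `K`:
`p(x) = ∑_{k=0}^K θ_k · C(K,k) · (1-x)^{K-k} · x^k` with all `θ_k ≥ 0`. -/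
theorem positive_polynomial_nonneg_bernstein_combination
    (p : Polynomial ℝ) (hp : ∀ x ∈ Set.Icc (0:ℝ) 1, 0 < p.eval x) :
    ∃ (K : ℕ) (θ : ℕ → ℝ), (∀ k, 0 ≤ θ k) ∧
      ∀ x : ℝ, p.eval x =
        ∑ k ∈ Finset.range (K + 1),
          θ k * (K.choose k : ℝ) * (1 - x) ^ (K - k) * x ^ k := by
  obtain ⟨K, hpos, hdeg⟩ :=
    ((eventually_forall_bernsteinCoeff_pos hp).and (eventually_ge_atTop p.natDegree)).exists
  refine ⟨K, fun k => if k ≤ K then bernsteinCoeff p K k else 0, fun k => ?_, fun x => ?_⟩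
  · dsimp only
    split_ifs with hk
    exacts [(hpos k hk).le, le_rfl]
  · rw [eval_eq_sum_bernsteinCoeff p hdeg]
    exact sum_congr rfl fun k hk => by
      simp only [if_pos (Nat.lt_succ_iff.mp (mem_range.mp hk))]
end

section
/- Let g be a real polynomial satisfying g(λ) > 0 for all λ ∈ [0,2]. Then there exist K ∈ ℕ and nonnegative real coefficients θ_0,…,θ_K such that g(λ) = ∑_{k=0}^{K} θ_k · 2^{−K} · C(K,k) · (2−λ)^{K−k} · λ^k for all λ ∈ ℝ. That is, every polynomial filter strictly positive on the spectral interval [0,2] can be expressed in BernNet form with nonnegative coefficients. -/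
/-!
A polynomial positive on `[0, 1]` factors into irreducible real factors of degree at most two,
each of which can be taken positive on `[0, 1]` (no root there, so constant sign). Nonnegative
Bernstein coefficients are preserved under products, so it suffices to treat a quadratic `q`:
elevated to degree `m`, its Bernstein coefficients are `q (k / m)` up to an error `O(1 / m)`, hence
nonnegative for large `m`. The BernNet form on `[0, 2]` is the Bernstein form of `λ ↦ g (2 λ)`.
-/

open Finset Polynomial Set

theorem bernsteinPolynomial.sum_natCast_smul (m : ℕ) :
    ∑ k ∈ range (m + 1), (k : ℝ) • bernsteinPolynomial ℝ m k = (m : ℝ) • X := by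
  simpa only [Nat.cast_smul_eq_nsmul] using bernsteinPolynomial.sum_smul ℝ m

theorem bernsteinPolynomial.sum_natCast_mul_smul (m : ℕ) :
    ∑ k ∈ range (m + 1), ((k : ℝ) * (k - 1)) • bernsteinPolynomial ℝ m k
      = ((m : ℝ) * (m - 1)) • X ^ 2 := by
  have cast_mul_pred (k : ℕ) : ((k * (k - 1) : ℕ) : ℝ) = k * (k - 1) := by
    rcases k with _ | k <;> simp
  simpa only [← Nat.cast_smul_eq_nsmul ℝ, cast_mul_pred] using bernsteinPolynomial.sum_mul_smul ℝ m

theorem bernsteinPolynomial.mul {R : Type*} [Field R] [CharZero R] {n m i j : ℕ} (hi : i ≤ n)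
    (hj : j ≤ m) :
    bernsteinPolynomial R n i * bernsteinPolynomial R m j =
      ((n.choose i * m.choose j : R) / (n + m).choose (i + j)) •
        bernsteinPolynomial R (n + m) (i + j) := by
  have hc : ((n + m).choose (i + j) : R) ≠ 0 := Nat.cast_ne_zero.2 (Nat.choose_pos (by omega)).ne'
  have hC : C ((n.choose i * m.choose j : R) / (n + m).choose (i + j)) *
      C ((n + m).choose (i + j) : R) = C (n.choose i : R) * C (m.choose j : R) := by
    rw [← C_mul, div_mul_cancel₀ _ hc, C_mul]
  have hexp : n + m - (i + j) = (n - i) + (m - j) := by omega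
  simp only [bernsteinPolynomial, hexp, pow_add, smul_eq_C_mul, ← C_eq_natCast]
  linear_combination (-(X : R[X]) ^ i * X ^ j * (1 - X) ^ (n - i) * (1 - X) ^ (m - j)) * hC

theorem quadratic_eq_sum_bernsteinPolynomial (a b c : ℝ) {m : ℕ} (hm : 2 ≤ m) :
    C c * X ^ 2 + C b * X + C a = ∑ k ∈ range (m + 1),
      (a + b * (k / m) + c * (k / m) ^ 2 - c * (k / m) * (1 - k / m) / (m - 1)) •
        bernsteinPolynomial ℝ m k := by
  have hm0 : (m : ℝ) ≠ 0 := by positivity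
  have hm1 : (m : ℝ) - 1 ≠ 0 := by
    have : (2 : ℝ) ≤ m := by exact_mod_cast hm
    linarith
  have weight (k : ℕ) : a + b * (k / m) + c * (k / m) ^ 2 - c * (k / m) * (1 - k / m) / (m - 1)
      = a + b / m * k + c / (m * (m - 1)) * (k * (k - 1)) := by
    field_simp
    ring
  symm
  calc ∑ k ∈ range (m + 1),
        (a + b * (k / m) + c * (k / m) ^ 2 - c * (k / m) * (1 - k / m) / (m - 1)) •
          bernsteinPolynomial ℝ m k
      = ∑ k ∈ range (m + 1), (a • bernsteinPolynomial ℝ m k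
          + (b / m) • ((k : ℝ) • bernsteinPolynomial ℝ m k)
          + (c / (m * (m - 1))) • (((k : ℝ) * (k - 1)) • bernsteinPolynomial ℝ m k)) :=
        sum_congr rfl fun k _ => by rw [weight, add_smul, add_smul, mul_smul, mul_smul]
    _ = a • 1 + (b / m) • ((m : ℝ) • X) + (c / (m * (m - 1))) • (((m : ℝ) * (m - 1)) • X ^ 2) := by
        rw [sum_add_distrib, sum_add_distrib, ← smul_sum, ← smul_sum, ← smul_sum,
          bernsteinPolynomial.sum, bernsteinPolynomial.sum_natCast_smul,
          bernsteinPolynomial.sum_natCast_mul_smul]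
    _ = C c * X ^ 2 + C b * X + C a := by
        rw [smul_smul, smul_smul, div_mul_cancel₀ _ hm0, div_mul_cancel₀ _ (mul_ne_zero hm0 hm1)]
        simp only [smul_eq_C_mul, mul_one]
        ring

def HasNonnegBernsteinCoeffs (n : ℕ) (p : ℝ[X]) : Prop :=
  ∃ θ : ℕ → ℝ, (∀ k, 0 ≤ θ k) ∧ p = ∑ k ∈ range (n + 1), θ k • bernsteinPolynomial ℝ n k

theorem hasNonnegBernsteinCoeffs_sum {ι : Type*} {n : ℕ} (s : Finset ι) {w : ι → ℝ} {κ : ι → ℕ}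
    (hw : ∀ x ∈ s, 0 ≤ w x) (hκ : ∀ x ∈ s, κ x ≤ n) :
    HasNonnegBernsteinCoeffs n (∑ x ∈ s, w x • bernsteinPolynomial ℝ n (κ x)) := by
  refine ⟨fun k => ∑ x ∈ s with κ x = k, w x,
    fun k => sum_nonneg fun x hx => hw x (mem_filter.1 hx).1, ?_⟩
  rw [← sum_fiberwise_of_maps_to fun x hx => mem_range_succ_iff.2 (hκ x hx)]
  refine sum_congr rfl fun k _ => ?_
  rw [sum_smul]
  exact sum_congr rfl fun x hx => by rw [(mem_filter.1 hx).2]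

theorem HasNonnegBernsteinCoeffs.mul {n m : ℕ} {p q : ℝ[X]} (hp : HasNonnegBernsteinCoeffs n p)
    (hq : HasNonnegBernsteinCoeffs m q) : HasNonnegBernsteinCoeffs (n + m) (p * q) := by
  obtain ⟨θ, hθ, rfl⟩ := hp
  obtain ⟨φ, hφ, rfl⟩ := hq
  rw [sum_mul_sum, ← sum_product']
  have term : ∀ x ∈ range (n + 1) ×ˢ range (m + 1),
      θ x.1 • bernsteinPolynomial ℝ n x.1 * φ x.2 • bernsteinPolynomial ℝ m x.2 =
        (θ x.1 * φ x.2 * ((n.choose x.1 * m.choose x.2 : ℝ) / (n + m).choose (x.1 + x.2))) •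
          bernsteinPolynomial ℝ (n + m) (x.1 + x.2) := by
    intro x hx
    rw [mem_product, mem_range_succ_iff, mem_range_succ_iff] at hx
    rw [smul_mul_smul_comm, bernsteinPolynomial.mul hx.1 hx.2, smul_smul]
  rw [sum_congr rfl term]
  refine hasNonnegBernsteinCoeffs_sum _ (fun x _ => ?_) fun x hx => ?_
  · exact mul_nonneg (mul_nonneg (hθ _) (hφ _)) (by positivity)
  · rw [mem_product, mem_range_succ_iff, mem_range_succ_iff] at hx
    omega

theorem hasNonnegBernsteinCoeffs_of_natDegree_le_two {p : ℝ[X]} (hp : p.natDegree ≤ 2)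
    (hpos : ∀ t ∈ Icc (0 : ℝ) 1, 0 < p.eval t) : ∃ n, HasNonnegBernsteinCoeffs n p := by
  obtain ⟨t₀, ht₀, hmin⟩ :=
    isCompact_Icc.exists_isMinOn (nonempty_Icc.2 zero_le_one) p.continuous.continuousOn
  have hδ : 0 < p.eval t₀ := hpos t₀ ht₀
  obtain ⟨N, hN⟩ := exists_nat_ge (|p.coeff 2| / (4 * p.eval t₀))
  have hquad := eq_quadratic_of_degree_le_two (natDegree_le_iff_degree_le.1 hp)
  refine ⟨N + 2, ?_⟩
  rw [hquad, quadratic_eq_sum_bernsteinPolynomial _ _ _ (by omega : 2 ≤ N + 2)]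
  refine hasNonnegBernsteinCoeffs_sum _ (fun k hk => ?_) fun k hk => mem_range_succ_iff.1 hk
  set x : ℝ := k / ((N + 2 : ℕ) : ℝ)
  have hx : x ∈ Icc (0 : ℝ) 1 := by
    have : (k : ℝ) ≤ (N + 2 : ℕ) := by exact_mod_cast mem_range_succ_iff.1 hk
    exact ⟨by positivity, div_le_one_of_le₀ this (by positivity)⟩
  have heval : p.eval x = p.coeff 2 * x ^ 2 + p.coeff 1 * x + p.coeff 0 := by
    conv_lhs => rw [hquad]
    simp only [eval_add, eval_mul, eval_C, eval_pow, eval_X]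
  have hcorr : p.coeff 2 * x * (1 - x) / (((N + 2 : ℕ) : ℝ) - 1) ≤ p.eval t₀ := by
    have hN1 : ((N + 2 : ℕ) : ℝ) - 1 = N + 1 := by push_cast; ring
    rw [hN1, div_le_iff₀ (by positivity)]
    rw [div_le_iff₀ (by positivity)] at hN
    have hquarter : x * (1 - x) ≤ 1 / 4 := by nlinarith [sq_nonneg (2 * x - 1)]
    have hx_nonneg : 0 ≤ x * (1 - x) := mul_nonneg hx.1 (by linarith [hx.2])
    nlinarith [le_abs_self (p.coeff 2), abs_nonneg (p.coeff 2)]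
  linarith [isMinOn_iff.1 hmin x hx]

theorem pos_on_Icc_of_mul_pos_of_eval_zero_pos {a b : ℝ[X]}
    (hab : ∀ t ∈ Icc (0 : ℝ) 1, 0 < (a * b).eval t) (ha : 0 < a.eval 0) :
    (∀ t ∈ Icc (0 : ℝ) 1, 0 < a.eval t) ∧ ∀ t ∈ Icc (0 : ℝ) 1, 0 < b.eval t := by
  have hapos : ∀ t ∈ Icc (0 : ℝ) 1, 0 < a.eval t := by
    intro t ht
    by_contra! hat
    obtain ⟨s, hs, hs0⟩ := intermediate_value_Icc' ht.1 a.continuous.continuousOn ⟨hat, ha.le⟩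
    have := hab s ⟨hs.1, hs.2.trans ht.2⟩
    rw [eval_mul, show a.eval s = 0 from hs0, zero_mul] at this
    exact this.false
  refine ⟨hapos, fun t ht => pos_of_mul_pos_right ?_ (hapos t ht).le⟩
  simpa only [eval_mul] using hab t ht

theorem exists_irreducible_factor_pos_on_Icc {p : ℝ[X]} (hp : ∀ t ∈ Icc (0 : ℝ) 1, 0 < p.eval t)
    (hdeg : 0 < p.natDegree) :
    ∃ a b : ℝ[X], p = a * b ∧ a.natDegree ≤ 2 ∧ b.natDegree < p.natDegree ∧
      (∀ t ∈ Icc (0 : ℝ) 1, 0 < a.eval t) ∧ ∀ t ∈ Icc (0 : ℝ) 1, 0 < b.eval t := by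
  have hp0 : p ≠ 0 := ne_zero_of_natDegree_gt hdeg
  obtain ⟨a, ha, b, rfl⟩ :=
    WfDvdMonoid.exists_irreducible_factor (not_isUnit_of_natDegree_pos p hdeg) hp0
  have hb0 : b ≠ 0 := right_ne_zero_of_mul hp0
  have hdeg_lt : b.natDegree < (a * b).natDegree := by
    rw [natDegree_mul ha.ne_zero hb0]
    have := ha.natDegree_pos
    omega
  have ha0 : a.eval 0 ≠ 0 := fun h => by
    simpa [h] using hp 0 ⟨le_rfl, zero_le_one⟩
  rcases ha0.lt_or_gt with hneg | hpos
  · have hp' : ∀ t ∈ Icc (0 : ℝ) 1, 0 < (-a * -b).eval t := by rwa [neg_mul_neg]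
    obtain ⟨hapos, hbpos⟩ := pos_on_Icc_of_mul_pos_of_eval_zero_pos hp' (by simpa using hneg)
    refine ⟨-a, -b, (neg_mul_neg a b).symm, ?_, ?_, hapos, hbpos⟩
    · simpa using ha.natDegree_le_two
    · simpa using hdeg_lt
  · obtain ⟨hapos, hbpos⟩ := pos_on_Icc_of_mul_pos_of_eval_zero_pos hp hpos
    exact ⟨a, b, rfl, ha.natDegree_le_two, hdeg_lt, hapos, hbpos⟩

theorem exists_hasNonnegBernsteinCoeffs_of_pos_on_Icc {p : ℝ[X]}
    (hp : ∀ t ∈ Icc (0 : ℝ) 1, 0 < p.eval t) : ∃ n, HasNonnegBernsteinCoeffs n p := by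
  induction hd : p.natDegree using Nat.strong_induction_on generalizing p with
  | _ d ih =>
    rcases Nat.eq_zero_or_pos d with hd0 | hdpos
    · exact hasNonnegBernsteinCoeffs_of_natDegree_le_two (by omega) hp
    obtain ⟨a, b, rfl, ha2, hb, hapos, hbpos⟩ :=
      exists_irreducible_factor_pos_on_Icc hp (hd ▸ hdpos)
    obtain ⟨n, hna⟩ := hasNonnegBernsteinCoeffs_of_natDegree_le_two ha2 hapos
    obtain ⟨m, hmb⟩ := ih _ (hd ▸ hb) hbpos rfl
    exact ⟨n + m, hna.mul hmb⟩

theorem bernsteinPolynomial.eval_div_two {n k : ℕ} (hk : k ≤ n) (x : ℝ) :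
    (bernsteinPolynomial ℝ n k).eval (x / 2) =
      ((2 : ℝ) ^ n)⁻¹ * n.choose k * (2 - x) ^ (n - k) * x ^ k := by
  have h2 : (2 : ℝ) ^ n = 2 ^ k * 2 ^ (n - k) := by rw [← pow_add, Nat.add_sub_cancel' hk]
  simp only [bernsteinPolynomial, eval_mul, eval_pow, eval_natCast, eval_X, eval_sub, eval_one]
  rw [show 1 - x / 2 = (2 - x) / 2 by ring, div_pow, div_pow, h2]
  field_simp

/-- Every real polynomial filter strictly positive on `[0,2]` can be written in BernNet
form with nonnegative coefficients:
`g(λ) = ∑_{k=0}^K θ_k · 2^{-K} · C(K,k) · (2-λ)^{K-k} · λ^k` with all `θ_k ≥ 0`. -/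
theorem positive_polynomial_filter_bernnet_form
    (g : Polynomial ℝ) (hg : ∀ lam ∈ Set.Icc (0:ℝ) 2, 0 < g.eval lam) :
    ∃ (K : ℕ) (θ : ℕ → ℝ), (∀ k, 0 ≤ θ k) ∧
      ∀ lam : ℝ, g.eval lam =
        ∑ k ∈ Finset.range (K + 1),
          θ k * ((2 : ℝ) ^ K)⁻¹ * (K.choose k : ℝ) * (2 - lam) ^ (K - k) * lam ^ k := by
  set f := g.comp (C 2 * X)
  have hf : ∀ t ∈ Icc (0 : ℝ) 1, 0 < f.eval t := fun t ht => by
    simpa [f] using hg (2 * t) ⟨by linarith [ht.1], by linarith [ht.2]⟩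
  obtain ⟨K, θ, hθ, hfK⟩ := exists_hasNonnegBernsteinCoeffs_of_pos_on_Icc hf
  refine ⟨K, θ, hθ, fun lam => ?_⟩
  calc g.eval lam = f.eval (lam / 2) := by simp [f, mul_div_cancel₀]
    _ = ∑ k ∈ range (K + 1), θ k * (bernsteinPolynomial ℝ K k).eval (lam / 2) := by
        rw [hfK, eval_finsetSum]
        simp only [eval_smul, smul_eq_mul]
    _ = _ := sum_congr rfl fun k hk => by
        rw [bernsteinPolynomial.eval_div_two (mem_range_succ_iff.1 hk)]
        ring
end

section
/- Let L be an n×n real symmetric positive semidefinite matrix, let t ≥ 0, and let x ∈ ℝⁿ. Then the matrix exp(t·L) − I is positive semidefinite, and z* := exp(−t·L)·x is a minimizer of the objective f(z) = (1/2)·zᵀ(exp(t·L) − I)z + (1/2)·‖z − x‖²; that is, f(exp(−t·L)·x) ≤ f(z) for all z ∈ ℝⁿ. -/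
/-!
Since `L ⪰ 0` and `t ≥ 0`, every term `(tL)^k / k!` of the exponential series is positive
semidefinite, so `exp(tL) - I`, the series without its `k = 0` term, is positive semidefinite.
Writing `A = exp(tL)`, the objective is `f z = ½ (zᵀAz - 2 z·x) + ½ ‖x‖²`, a convex quadratic
minimized wherever `A z = x`; and `A (exp(-tL) x) = x` because `exp(-tL) = exp(tL)⁻¹`.
-/

open Matrix

theorem HasSum.dotProduct_mulVec {ι R m : Type*} [Fintype m] [Semiring R] [TopologicalSpace R]
    [IsTopologicalSemiring R] {f : ι → Matrix m m R} {A : Matrix m m R} (hf : HasSum f A)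
    (v w : m → R) : HasSum (fun i => v ⬝ᵥ f i *ᵥ w) (v ⬝ᵥ A *ᵥ w) :=
  hf.map (G := Matrix m m R →+ R)
    { toFun B := v ⬝ᵥ B *ᵥ w
      map_zero' := by rw [zero_mulVec, dotProduct_zero]
      map_add' B C := by rw [add_mulVec, dotProduct_add] }
    (show Continuous fun B : Matrix m m R => v ⬝ᵥ B *ᵥ w by fun_prop)

namespace Matrix

variable {m : Type*} [Fintype m]

open scoped Norms.Operator in
theorem PosSemidef.exp_sub_one [DecidableEq m] {M : Matrix m m ℝ} (hM : M.PosSemidef) :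
    (NormedSpace.exp M - 1).PosSemidef := by
  refine .of_dotProduct_mulVec_nonneg (hM.1.exp.sub isHermitian_one) fun z => ?_
  have hseries : HasSum (fun k : ℕ => z ⬝ᵥ ((k.factorial : ℝ)⁻¹ • M ^ k) *ᵥ z)
      (z ⬝ᵥ NormedSpace.exp M *ᵥ z) :=
    (NormedSpace.exp_series_hasSum_exp' M).dotProduct_mulVec z z
  have hterm : ∀ k, 0 ≤ z ⬝ᵥ ((k.factorial : ℝ)⁻¹ • M ^ k) *ᵥ z := fun k => by
    rw [smul_mulVec, dotProduct_smul, smul_eq_mul]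
    exact mul_nonneg (by positivity) (by simpa using (hM.pow k).dotProduct_mulVec_nonneg z)
  have hfirst : z ⬝ᵥ z ≤ z ⬝ᵥ NormedSpace.exp M *ᵥ z := by
    simpa using le_hasSum hseries 0 fun k _ => hterm k
  simpa [sub_mulVec, dotProduct_sub] using hfirst

theorem PosSemidef.dotProduct_mulVec_sub_two_mul_le {A : Matrix m m ℝ} (hA : A.PosSemidef)
    {x z₀ : m → ℝ} (hz₀ : A *ᵥ z₀ = x) (z : m → ℝ) :
    z₀ ⬝ᵥ A *ᵥ z₀ - 2 * (z₀ ⬝ᵥ x) ≤ z ⬝ᵥ A *ᵥ z - 2 * (z ⬝ᵥ x) := by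
  have hsymm : z₀ ⬝ᵥ A *ᵥ z = z ⬝ᵥ A *ᵥ z₀ := by
    rw [dotProduct_mulVec, ← mulVec_transpose, (isHermitian_iff_isSymm.mp hA.isHermitian).eq,
      dotProduct_comm]
  have hgap := hA.dotProduct_mulVec_nonneg (z - z₀)
  simp only [star_trivial, mulVec_sub, sub_dotProduct, dotProduct_sub] at hgap
  subst hz₀
  linarith

end Matrix

/-- Heat-kernel energy: if `L` is real symmetric positive semidefinite and `t ≥ 0`, then
`exp(tL) - I` is positive semidefinite and `z* = exp(-tL)·x` minimizes the objective
`f(z) = (1/2)·zᵀ(exp(tL) - I)z + (1/2)·‖z-x‖²` (Euclidean norm: `‖v‖² = ∑ i, (v i)²`). -/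
theorem heat_kernel_graph_optimization_minimizer
    {n : ℕ} (L : Matrix (Fin n) (Fin n) ℝ)
    (hL : L.PosSemidef) (t : ℝ) (ht : 0 ≤ t) (x : Fin n → ℝ)
    (f : (Fin n → ℝ) → ℝ)
    (hf : ∀ z, f z = (1 / 2) * (z ⬝ᵥ (NormedSpace.exp (t • L) - 1) *ᵥ z)
        + (1 / 2) * ∑ i, (z i - x i) ^ 2) :
    (NormedSpace.exp (t • L) - (1 : Matrix (Fin n) (Fin n) ℝ)).PosSemidef ∧
    ∀ z : Fin n → ℝ, f (NormedSpace.exp ((-t) • L) *ᵥ x) ≤ f z := by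
  set A := NormedSpace.exp (t • L)
  have hA₁ : (A - 1).PosSemidef := (hL.smul ht).exp_sub_one
  have hA : A.PosSemidef := by simpa using hA₁.add PosSemidef.one
  have hinv : A *ᵥ (NormedSpace.exp ((-t) • L) *ᵥ x) = x := by
    rw [mulVec_mulVec, neg_smul, exp_neg, mul_nonsing_inv _ (A.isUnit_iff_isUnit_det.mp
      (isUnit_exp _)), one_mulVec]
  have hf' : ∀ z, f z = (1 / 2) * (z ⬝ᵥ A *ᵥ z - 2 * (z ⬝ᵥ x)) + (1 / 2) * (x ⬝ᵥ x) := by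
    intro z
    have hnorm : ∑ i, (z i - x i) ^ 2 = (z - x) ⬝ᵥ (z - x) := by simp [dotProduct, sq]
    rw [hf, hnorm, sub_mulVec, one_mulVec]
    simp only [dotProduct_sub, sub_dotProduct, dotProduct_comm x z]
    ring
  refine ⟨hA₁, fun z => ?_⟩
  rw [hf', hf']
  linarith [hA.dotProduct_mulVec_sub_two_mul_le hinv z]
end
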